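/- arXiv:1706.08405 — 3 statements merged into one kernel-verified Lean document; each statement's English description precedes it below -/
import Mathlib

section
/- Let G be a maximally almost periodic group. Then the character δ_e (which takes value 1 at the identity and 0 elsewhere) is a pointwise limit of traces of finite-dimensional representations: for every ε > 0 and every finite subset F ⊆ G, there exist n ≥ 1 and a group homomorphism π from G to the group of unitary n×n complex matrices such that |δ_e(g) − (1/n)·Tr(π(g))| ≤ ε for all g ∈ F (equivalently, |(1/n)·Tr(π(g))| ≤ ε for every g ∈ F with g ≠ 1). -/
/-!
Normalized traces `g ↦ tr π(g) / dim π` of finite-dimensional unitary representations form a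
multiplicative monoid of functions bounded by `1` and equal to `1` at the identity (tensor
products multiply them). If `π(g) ≠ 1` then `χ_π(g) ≠ 1`, since a unitary matrix with trace equal
to its size is the identity; by strict convexity of the unit disc, the character
`(χ_π + 1) / 2` of `π ⊕ 1` is then strictly smaller than `1` in modulus at `g`, and its powers
(characters of tensor powers) become as small as we like there. The product of such characters
over the non-identity elements of `F` is the required one.
-/

open scoped Classical

open Matrix
open scoped Kronecker

namespace Matrix

section Unitary

variable {α ι κ : Type*} [CommRing α] [StarRing α] [Fintype ι] [DecidableEq ι]
  [Fintype κ] [DecidableEq κ]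

theorem fromBlocks_mem_unitaryGroup {A : Matrix ι ι α} {D : Matrix κ κ α}
    (hA : A ∈ unitaryGroup ι α) (hD : D ∈ unitaryGroup κ α) :
    fromBlocks A 0 0 D ∈ unitaryGroup (ι ⊕ κ) α := by
  rw [mem_unitaryGroup_iff, star_eq_conjTranspose, fromBlocks_conjTranspose, fromBlocks_multiply]
  simp [← star_eq_conjTranspose, mem_unitaryGroup_iff.mp hA, mem_unitaryGroup_iff.mp hD]

theorem reindex_mem_unitaryGroup (e : ι ≃ κ) {A : Matrix ι ι α} (hA : A ∈ unitaryGroup ι α) :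
    reindex e e A ∈ unitaryGroup κ α := by
  rw [mem_unitaryGroup_iff, star_eq_conjTranspose, conjTranspose_reindex, reindex_apply,
    reindex_apply, submatrix_mul_equiv, ← star_eq_conjTranspose, mem_unitaryGroup_iff.mp hA,
    submatrix_one_equiv]

namespace unitaryGroup

def kronecker : unitaryGroup ι α × unitaryGroup κ α →* unitaryGroup (ι × κ) α where
  toFun U := ⟨(U.1 : Matrix ι ι α) ⊗ₖ (U.2 : Matrix κ κ α), kronecker_mem_unitary U.1.2 U.2.2⟩
  map_one' := Subtype.ext one_kronecker_one
  map_mul' _ _ := Subtype.ext (mul_kronecker_mul _ _ _ _)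

@[simp]
theorem coe_kronecker (U : unitaryGroup ι α × unitaryGroup κ α) :
    (kronecker U : Matrix (ι × κ) (ι × κ) α) = (U.1 : Matrix ι ι α) ⊗ₖ (U.2 : Matrix κ κ α) :=
  rfl

def fromBlocks : unitaryGroup ι α × unitaryGroup κ α →* unitaryGroup (ι ⊕ κ) α where
  toFun U := ⟨Matrix.fromBlocks U.1 0 0 U.2, fromBlocks_mem_unitaryGroup U.1.2 U.2.2⟩
  map_one' := Subtype.ext fromBlocks_one
  map_mul' _ _ := Subtype.ext (by simp [fromBlocks_multiply])

@[simp]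
theorem coe_fromBlocks (U : unitaryGroup ι α × unitaryGroup κ α) :
    (fromBlocks U : Matrix (ι ⊕ κ) (ι ⊕ κ) α) = Matrix.fromBlocks U.1 0 0 U.2 :=
  rfl

def reindex (e : ι ≃ κ) : unitaryGroup ι α →* unitaryGroup κ α where
  toFun U := ⟨Matrix.reindex e e U, reindex_mem_unitaryGroup e U.2⟩
  map_one' := Subtype.ext (submatrix_one_equiv _)
  map_mul' _ _ := Subtype.ext (submatrix_mul_equiv _ _ _ _ _).symm

@[simp]
theorem coe_reindex (e : ι ≃ κ) (U : unitaryGroup ι α) :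
    (reindex e U : Matrix κ κ α) = Matrix.reindex e e U :=
  rfl

end unitaryGroup

end Unitary

theorem trace_reindex {α ι κ : Type*} [AddCommMonoid α] [Fintype ι] [Fintype κ] (e : ι ≃ κ)
    (A : Matrix ι ι α) : trace (reindex e e A) = trace A :=
  Fintype.sum_equiv e.symm _ _ fun _ => rfl

theorem trace_fromBlocks {α ι κ : Type*} [AddCommMonoid α] [Fintype ι] [Fintype κ]
    (A : Matrix ι ι α) (B : Matrix ι κ α) (C : Matrix κ ι α) (D : Matrix κ κ α) :
    trace (fromBlocks A B C D) = trace A + trace D :=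
  Fintype.sum_sum_type _

section RCLike

variable {𝕜 n : Type*} [RCLike 𝕜] [Fintype n] [DecidableEq n] {U : Matrix n n 𝕜}

theorem norm_trace_le_card_of_mem_unitaryGroup (hU : U ∈ unitaryGroup n 𝕜) :
    ‖trace U‖ ≤ Fintype.card n :=
  calc ‖trace U‖ ≤ ∑ i, ‖U i i‖ := norm_sum_le _ _
    _ ≤ ∑ _i : n, (1 : ℝ) := Finset.sum_le_sum fun i _ => entry_norm_bound_of_unitary hU i i
    _ = Fintype.card n := by simp

open scoped ComplexOrder in
theorem eq_one_of_mem_unitaryGroup_of_trace_eq_card (hU : U ∈ unitaryGroup n 𝕜)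
    (h : trace U = Fintype.card n) : U = 1 := by
  have hfrob : (U - 1)ᴴ * (U - 1) = 1 - Uᴴ - (U - 1) := by
    rw [conjTranspose_sub, conjTranspose_one, sub_mul, mul_sub, ← star_eq_conjTranspose,
      mem_unitaryGroup_iff'.mp hU, one_mul, mul_one]
  rw [← sub_eq_zero, ← trace_conjTranspose_mul_self_eq_zero_iff, hfrob]
  simp [trace_sub, h]

end RCLike

end Matrix

def normalizedUnitaryCharacters (G : Type*) [Group G] : Submonoid (G → ℂ) where
  carrier := {χ | ∃ n, 1 ≤ n ∧ ∃ π : G →* unitaryGroup (Fin n) ℂ,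
    ∀ g, χ g = trace (π g : Matrix (Fin n) (Fin n) ℂ) / n}
  one_mem' := ⟨1, le_rfl, 1, fun g => by simp⟩
  mul_mem' := by
    rintro χ ψ ⟨n, hn, π, hπ⟩ ⟨m, hm, ρ, hρ⟩
    refine ⟨n * m, Nat.one_le_iff_ne_zero.mpr (by positivity),
      ((unitaryGroup.reindex finProdFinEquiv).comp unitaryGroup.kronecker).comp (π.prod ρ),
      fun g => ?_⟩
    simp only [Pi.mul_apply, hπ, hρ, MonoidHom.comp_apply, unitaryGroup.coe_reindex,
      trace_reindex, unitaryGroup.coe_kronecker, MonoidHom.prod_apply, trace_kronecker,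
      Nat.cast_mul]
    ring

namespace normalizedUnitaryCharacters

variable {G : Type*} [Group G] {χ : G → ℂ}

theorem mem_of_unitaryRep {ι : Type*} [Fintype ι] [DecidableEq ι] [Nonempty ι]
    (π : G →* unitaryGroup ι ℂ) :
    (fun g => trace (π g : Matrix ι ι ℂ) / Fintype.card ι) ∈ normalizedUnitaryCharacters G :=
  ⟨Fintype.card ι, Fintype.card_pos, (unitaryGroup.reindex (Fintype.equivFin ι)).comp π,
    fun g => by rw [MonoidHom.comp_apply, unitaryGroup.coe_reindex, trace_reindex]⟩

theorem norm_le_one (hχ : χ ∈ normalizedUnitaryCharacters G) (g : G) : ‖χ g‖ ≤ 1 := by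
  obtain ⟨n, hn, π, hπ⟩ := hχ
  rw [hπ, norm_div, Complex.norm_natCast, div_le_one (by exact_mod_cast hn)]
  simpa using norm_trace_le_card_of_mem_unitaryGroup (π g).2

theorem apply_one (hχ : χ ∈ normalizedUnitaryCharacters G) : χ 1 = 1 := by
  obtain ⟨n, hn, π, hπ⟩ := hχ
  rw [hπ, map_one, OneMemClass.coe_one, trace_one, Fintype.card_fin]
  exact div_self (by exact_mod_cast Nat.one_le_iff_ne_zero.mp hn)

theorem average_one_mem (hχ : χ ∈ normalizedUnitaryCharacters G) :
    (fun g => (χ g + 1) / 2) ∈ normalizedUnitaryCharacters G := by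
  obtain ⟨n, hn, π, hπ⟩ := hχ
  have : NeZero n := ⟨by omega⟩
  convert mem_of_unitaryRep
    (unitaryGroup.fromBlocks.comp (π.prod (1 : G →* unitaryGroup (Fin n) ℂ))) using 2 with g
  have hn' : (n : ℂ) ≠ 0 := by exact_mod_cast NeZero.ne n
  simp only [hπ, MonoidHom.comp_apply, unitaryGroup.coe_fromBlocks, MonoidHom.prod_apply,
    trace_fromBlocks, MonoidHom.one_apply, OneMemClass.coe_one, trace_one, Fintype.card_sum,
    Fintype.card_fin, Nat.cast_add]
  field_simp
  ring

theorem exists_apply_ne_one_of_unitaryRep {ι : Type*} [Fintype ι] [DecidableEq ι] [Nonempty ι]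
    (π : G →* unitaryGroup ι ℂ) {g : G} (hg : π g ≠ 1) :
    ∃ χ ∈ normalizedUnitaryCharacters G, χ g ≠ 1 := by
  refine ⟨_, mem_of_unitaryRep π, fun h => hg (Subtype.ext ?_)⟩
  apply eq_one_of_mem_unitaryGroup_of_trace_eq_card (π g).2
  rwa [div_eq_one_iff_eq (by simp)] at h

theorem exists_norm_apply_lt_one (hχ : χ ∈ normalizedUnitaryCharacters G) {g : G}
    (hg : χ g ≠ 1) : ∃ ψ ∈ normalizedUnitaryCharacters G, ‖ψ g‖ < 1 := by
  refine ⟨_, average_one_mem hχ, ?_⟩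
  have hmid : (χ g + 1) / 2 = (1 / 2 : ℝ) • χ g + (1 / 2 : ℝ) • (1 : ℂ) := by
    rw [Complex.real_smul, Complex.real_smul]
    push_cast
    ring
  rw [hmid]
  exact norm_combo_lt_of_ne (norm_le_one hχ g) norm_one.le hg (by norm_num) (by norm_num)
    (by norm_num)

theorem exists_norm_apply_le (hχ : χ ∈ normalizedUnitaryCharacters G) {g : G}
    (hg : ‖χ g‖ < 1) {ε : ℝ} (hε : 0 < ε) : ∃ ψ ∈ normalizedUnitaryCharacters G, ‖ψ g‖ ≤ ε := by
  obtain ⟨k, hk⟩ := exists_pow_lt_of_lt_one hε hg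
  exact ⟨χ ^ k, pow_mem hχ k, by simpa using hk.le⟩

theorem exists_forall_norm_apply_le {ε : ℝ} {F : Finset G}
    (hF : ∀ g ∈ F, ∃ χ ∈ normalizedUnitaryCharacters G, ‖χ g‖ ≤ ε) :
    ∃ χ ∈ normalizedUnitaryCharacters G, ∀ g ∈ F, ‖χ g‖ ≤ ε := by
  choose! χ hχ hχε using hF
  refine ⟨∏ h ∈ F, χ h, prod_mem fun h hh => hχ h hh, fun g hg => ?_⟩
  rw [Finset.prod_apply, ← Finset.mul_prod_erase F _ hg, norm_mul, norm_prod]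
  calc ‖χ g g‖ * ∏ h ∈ F.erase g, ‖χ h g‖ ≤ ‖χ g g‖ * 1 := by
        gcongr
        exact Finset.prod_le_one (fun _ _ => norm_nonneg _)
          fun h hh => norm_le_one (hχ h (Finset.mem_of_mem_erase hh)) g
    _ ≤ ε := by rw [mul_one]; exact hχε g hg

end normalizedUnitaryCharacters

/-- If `G` is maximally almost periodic (finite-dimensional unitary
representations separate the points of `G`), then the character `δ_e` is a
pointwise limit of normalized traces of finite-dimensional unitary
representations. -/
theorem map_group_delta_fd_trace_limit {G : Type*} [Group G]
    (hMAP : ∀ g : G, g ≠ 1 →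
      ∃ n : ℕ, 1 ≤ n ∧ ∃ π : G →* Matrix.unitaryGroup (Fin n) ℂ, π g ≠ 1) :
    ∀ ε > (0 : ℝ), ∀ F : Finset G,
      ∃ n : ℕ, 1 ≤ n ∧
        ∃ π : G →* Matrix.unitaryGroup (Fin n) ℂ,
          ∀ g ∈ F,
            ‖(if g = 1 then (1 : ℂ) else 0) -
              Matrix.trace ((π g : Matrix (Fin n) (Fin n) ℂ)) / n‖ ≤ ε := by
  open normalizedUnitaryCharacters in
  intro ε hε F
  have hsmall : ∀ g ∈ F.filter (· ≠ 1), ∃ χ ∈ normalizedUnitaryCharacters G, ‖χ g‖ ≤ ε := by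
    intro g hg
    obtain ⟨n, hn, π, hπ⟩ := hMAP g (Finset.mem_filter.mp hg).2
    have : NeZero n := ⟨by omega⟩
    obtain ⟨χ, hχ, hχg⟩ := exists_apply_ne_one_of_unitaryRep π hπ
    obtain ⟨ψ, hψ, hψg⟩ := exists_norm_apply_lt_one hχ hχg
    exact exists_norm_apply_le hψ hψg hε
  obtain ⟨χ, hχ, hχF⟩ := exists_forall_norm_apply_le hsmall
  obtain ⟨n, hn, π, hπ⟩ := id hχ
  refine ⟨n, hn, π, fun g hg => ?_⟩
  rw [← hπ]
  split_ifs with h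
  · rw [h, apply_one hχ, sub_self, norm_zero]
    exact hε.le
  · rw [zero_sub, norm_neg]
    exact hχF g (Finset.mem_filter.mpr ⟨hg, h⟩)
end

section
/- Let G₀ be a finite group, let H be a subgroup of the center of G₀, and let χ : H → 𝕋 be a group homomorphism into the circle group 𝕋 = {z ∈ ℂ : |z| = 1}. Then there exist N ≥ 1 and a group homomorphism π from G₀ to the group of unitary N×N complex matrices such that (1/N)·Tr(π(g)) = χ(g) for every g ∈ H and (1/N)·Tr(π(g)) = 0 for every g ∈ G₀ with g ∉ H. -/
/-- Frobenius induction from a central subgroup: if `G₀` is a finite group,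
`H` a subgroup of its center and `χ : H → 𝕋` a homomorphism into the circle
group, then there is a finite-dimensional unitary representation `π` of `G₀`
whose normalized trace equals `χ` on `H` and vanishes off `H`. -/
theorem induced_character_from_central_subgroup
    {G₀ : Type*} [Group G₀] [Finite G₀]
    (H : Subgroup G₀) (hH : H ≤ Subgroup.center G₀)
    (χ : H →* Circle) :
    ∃ N : ℕ, 1 ≤ N ∧
      ∃ π : G₀ →* Matrix.unitaryGroup (Fin N) ℂ,
        (∀ (g : G₀) (hg : g ∈ H),
          Matrix.trace ((π g : Matrix (Fin N) (Fin N) ℂ)) / N = (χ ⟨g, hg⟩ : ℂ)) ∧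
        ∀ g : G₀, g ∉ H →
          Matrix.trace ((π g : Matrix (Fin N) (Fin N) ℂ)) / N = 0 := by
  classical
  cases nonempty_fintype G₀
  set N : ℕ := Fintype.card (G₀ ⧸ H) with hNdef
  have hN1 : 1 ≤ N := Fintype.card_pos
  have hNne : (N : ℂ) ≠ 0 := Nat.cast_ne_zero.2 (by omega)
  let e : (G₀ ⧸ H) ≃ Fin N := Fintype.equivFin _
  let τ : Fin N → G₀ := fun i => Quotient.out (e.symm i)
  have hτ : ∀ i : Fin N, ((τ i : G₀) : G₀ ⧸ H) = e.symm i := fun i =>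
    QuotientGroup.out_eq' _
  have hmem : ∀ (x : G₀) (j : Fin N), (x⁻¹ * τ j ∈ H ↔ j = e (x : G₀ ⧸ H)) := by
    intro x j
    rw [← QuotientGroup.eq, hτ, Equiv.eq_symm_apply]
    exact eq_comm
  have hmem' : ∀ (g x : G₀) (j : Fin N),
      (x⁻¹ * g * τ j ∈ H ↔ j = e ((g⁻¹ * x : G₀) : G₀ ⧸ H)) := by
    intro g x j
    have hx : x⁻¹ * g * τ j = (g⁻¹ * x)⁻¹ * τ j := by group
    rw [hx, hmem]
  let M : G₀ → Matrix (Fin N) (Fin N) ℂ := fun g =>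
    Matrix.of fun i j =>
      if p : (τ i)⁻¹ * g * τ j ∈ H then (χ ⟨(τ i)⁻¹ * g * τ j, p⟩ : ℂ) else 0
  have hM_one : M 1 = 1 := by
    ext i j
    by_cases h : i = j
    · subst h
      have hx : (τ i)⁻¹ * 1 * τ i = 1 := by group
      have hp : (τ i)⁻¹ * 1 * τ i ∈ H := by rw [hx]; exact H.one_mem
      simp only [M, Matrix.of_apply, Matrix.one_apply_eq]
      rw [dif_pos hp]
      have h1 : (⟨(τ i)⁻¹ * 1 * τ i, hp⟩ : H) = 1 := Subtype.ext hx
      rw [h1, map_one, Circle.coe_one]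
    · simp only [M, Matrix.of_apply, Matrix.one_apply_ne h]
      rw [dif_neg]
      intro p
      apply h
      have := (hmem' 1 (τ i) j).1 p
      simpa [hτ] using this.symm
  have hM_mul : ∀ g₁ g₂ : G₀, M g₁ * M g₂ = M (g₁ * g₂) := by
    intro g₁ g₂
    ext i k
    rw [Matrix.mul_apply]
    set j₀ : Fin N := e ((g₁⁻¹ * τ i : G₀) : G₀ ⧸ H) with hj₀
    have hA : (τ i)⁻¹ * g₁ * τ j₀ ∈ H := (hmem' g₁ (τ i) j₀).2 hj₀
    rw [Finset.sum_eq_single j₀]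
    · simp only [M, Matrix.of_apply]
      rw [dif_pos hA]
      by_cases hC : (τ i)⁻¹ * (g₁ * g₂) * τ k ∈ H
      · have hB : (τ j₀)⁻¹ * g₂ * τ k ∈ H := by
          have hx : (τ j₀)⁻¹ * g₂ * τ k =
              ((τ i)⁻¹ * g₁ * τ j₀)⁻¹ * ((τ i)⁻¹ * (g₁ * g₂) * τ k) := by group
          rw [hx]; exact H.mul_mem (H.inv_mem hA) hC
        rw [dif_pos hB, dif_pos hC, ← Circle.coe_mul, ← map_mul]
        have hel : ((τ i)⁻¹ * g₁ * τ j₀) * ((τ j₀)⁻¹ * g₂ * τ k)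
            = (τ i)⁻¹ * (g₁ * g₂) * τ k := by group
        exact congrArg _ (congrArg χ (Subtype.ext hel))
      · have hB : (τ j₀)⁻¹ * g₂ * τ k ∉ H := by
          intro hB
          apply hC
          have hx : (τ i)⁻¹ * (g₁ * g₂) * τ k =
              ((τ i)⁻¹ * g₁ * τ j₀) * ((τ j₀)⁻¹ * g₂ * τ k) := by group
          rw [hx]; exact H.mul_mem hA hB
        rw [dif_neg hB, dif_neg hC, mul_zero]
    · intro j _ hj
      simp only [M, Matrix.of_apply]
      rw [dif_neg fun p => hj ((hmem' g₁ (τ i) j).1 p), zero_mul]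
    · intro h; exact absurd (Finset.mem_univ j₀) h
  have hM_star : ∀ g : G₀, star (M g) = M g⁻¹ := by
    intro g
    ext i j
    simp only [Matrix.star_apply, M, Matrix.of_apply]
    by_cases p : (τ j)⁻¹ * g * τ i ∈ H
    · have hx : (τ i)⁻¹ * g⁻¹ * τ j = ((τ j)⁻¹ * g * τ i)⁻¹ := by group
      have p' : (τ i)⁻¹ * g⁻¹ * τ j ∈ H := hx ▸ H.inv_mem p
      rw [dif_pos p, dif_pos p']
      have h2 : (⟨(τ i)⁻¹ * g⁻¹ * τ j, p'⟩ : H) = (⟨(τ j)⁻¹ * g * τ i, p⟩ : H)⁻¹ :=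
        Subtype.ext hx
      rw [h2, map_inv, Circle.coe_inv_eq_conj]
      rfl
    · have p' : (τ i)⁻¹ * g⁻¹ * τ j ∉ H := by
        intro q
        apply p
        have hx : (τ j)⁻¹ * g * τ i = ((τ i)⁻¹ * g⁻¹ * τ j)⁻¹ := by group
        rw [hx]; exact H.inv_mem q
      rw [dif_neg p, dif_neg p', star_zero]
  have hU : ∀ g : G₀, M g ∈ Matrix.unitaryGroup (Fin N) ℂ := by
    intro g
    rw [Matrix.mem_unitaryGroup_iff, hM_star, hM_mul, mul_inv_cancel, hM_one]
  let π : G₀ →* Matrix.unitaryGroup (Fin N) ℂ :=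
    MonoidHom.mk' (fun g => ⟨M g, hU g⟩) (fun a b => Subtype.ext (hM_mul a b).symm)
  refine ⟨N, hN1, π, ?_, ?_⟩
  · intro g hg
    have hc : ∀ i : Fin N, (τ i)⁻¹ * g * τ i = g := by
      intro i
      have hz := (Subgroup.mem_center_iff.1 (hH hg)) (τ i)⁻¹
      rw [show (τ i)⁻¹ * g * τ i = ((τ i)⁻¹ * g) * τ i from rfl, hz]
      group
    have htr : Matrix.trace (M g) = (N : ℂ) * (χ ⟨g, hg⟩ : ℂ) := by
      rw [Matrix.trace]
      have hterm : ∀ i : Fin N, Matrix.diag (M g) i = (χ ⟨g, hg⟩ : ℂ) := by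
        intro i
        simp only [Matrix.diag, M, Matrix.of_apply]
        rw [dif_pos ((hc i).symm ▸ hg)]
        congr 1
        exact congrArg χ (Subtype.ext (hc i))
      rw [Finset.sum_congr rfl fun i _ => hterm i, Finset.sum_const,
        Finset.card_univ, nsmul_eq_mul, Fintype.card_fin]
    show Matrix.trace (M g) / N = _
    rw [htr, mul_comm, mul_div_assoc, div_self hNne, mul_one]
  · intro g hg
    have htr : Matrix.trace (M g) = 0 := by
      rw [Matrix.trace]
      refine Finset.sum_eq_zero fun i _ => ?_
      simp only [Matrix.diag, M, Matrix.of_apply]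
      rw [dif_neg]
      intro p
      apply hg
      have hcen := Subgroup.mem_center_iff.1 (hH p) (τ i)
      have hgeq : g = (τ i * ((τ i)⁻¹ * g * τ i)) * (τ i)⁻¹ := by group
      rw [hgeq, hcen]
      simpa using p
    show Matrix.trace (M g) / N = 0
    rw [htr, zero_div]
end

section
/- Let G be a countable set, let α be a free ultrafilter on ℕ (an ultrafilter containing the cofinite filter), let f : G → ℕ → ℂ and τ : G → ℂ, and suppose that for every g ∈ G the function n ↦ f(g)(n) converges to τ(g) along α (i.e. Tendsto (fun n => f g n) α (nhds (τ g))). Then there exists a strictly increasing sequence (n_j) of natural numbers such that for every g ∈ G one has lim_{j→∞} f(g)(n_j) = τ(g). -/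
open Filter

/-- If `f g n → τ g` along a free ultrafilter `α` on `ℕ` for every `g` in a
countable set `G`, then there is a single strictly increasing subsequence
`(n_j)` along which `f g (n_j) → τ g` for every `g ∈ G`. -/
theorem ultrafilter_diagonal_subsequence {G : Type*} [Countable G]
    (α : Ultrafilter ℕ) (hα : (cofinite : Filter ℕ) ≤ (α : Filter ℕ))
    (f : G → ℕ → ℂ) (τ : G → ℂ)
    (h : ∀ g : G, Tendsto (fun n => f g n) (α : Filter ℕ) (nhds (τ g))) :
    ∃ n : ℕ → ℕ, StrictMono n ∧
      ∀ g : G, Tendsto (fun j => f g (n j)) atTop (nhds (τ g)) := by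
  rcases isEmpty_or_nonempty G with hG | hG
  · exact ⟨id, strictMono_id, fun g => (hG.false g).elim⟩
  obtain ⟨e, he⟩ := exists_surjective_nat G
  set S : ℕ → Set ℕ := fun k =>
    {m | ∀ i ≤ k, dist (f (e i) m) (τ (e i)) < 1 / (k + 1)} with hSdef
  have hSα : ∀ k, S k ∈ α := by
    intro k
    have hev : ∀ᶠ m in (α : Filter ℕ), ∀ i ∈ Finset.range (k + 1),
        dist (f (e i) m) (τ (e i)) < 1 / (k + 1) := by
      rw [eventually_all_finset]
      intro i _
      have := (h (e i)).eventually
        (Metric.ball_mem_nhds (τ (e i)) (by positivity : (0:ℝ) < 1 / (k + 1)))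
      simpa [Metric.mem_ball] using this
    exact hev.mono fun m hm i hi => hm i (Finset.mem_range.2 (Nat.lt_succ_of_le hi))
  have hSinf : ∀ k, (S k).Infinite := by
    intro k
    have hc : (S k)ᶜ.Finite := hα (hSα k)
    simpa using hc.infinite_compl
  have key : ∀ (x k : ℕ), ∃ y ∈ S k, x < y := fun x k => (hSinf k).exists_gt x
  choose F hF1 hF2 using key
  let n : ℕ → ℕ := fun j => Nat.rec (F 0 0) (fun j nj => F nj (j + 1)) j
  have hmono : StrictMono n := strictMono_nat_of_lt_succ fun j => hF2 _ _
  have hmem : ∀ j, n j ∈ S j := by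
    intro j
    cases j with
    | zero => exact hF1 0 0
    | succ j => exact hF1 _ _
  refine ⟨n, hmono, fun g => ?_⟩
  obtain ⟨i, rfl⟩ := he g
  rw [Metric.tendsto_atTop]
  intro ε hε
  obtain ⟨M, hM⟩ := exists_nat_one_div_lt hε
  refine ⟨max i M, fun j hj => ?_⟩
  have h1 : i ≤ j := le_trans (le_max_left _ _) hj
  have h2 : dist (f (e i) (n j)) (τ (e i)) < 1 / (j + 1) := hmem j i h1
  have h3 : (1 : ℝ) / (j + 1) ≤ 1 / (M + 1) := by
    have hMj : (M : ℝ) + 1 ≤ (j : ℝ) + 1 := by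
      have : M ≤ j := le_trans (le_max_right _ _) hj
      exact_mod_cast Nat.succ_le_succ this
    exact one_div_le_one_div_of_le (by positivity) hMj
  linarith
end
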